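/- Let N ≥ 4 be an integer, α ∈ (0,2) and β > 1/(N−3). Let h(r) = r/(ln r)^β for r ≥ e, and consider the thorn A = {(x₁,…,x_N) ∈ ℝ^N : x₁ ≥ e and x₂² + ⋯ + x_N² ≤ h(x₁)²}. Then for every x ∈ ℝ^N, ∫_A |x−y|^{-(N−α)} dy = +∞. -/

import Mathlib

/-! The thorn contains, for every large `a`, the slab `[a/2, a] × [0, r]^(N-1)` with
`r ≍ a / (log a)^β`, on which `|x - y| ≲ a`. Hence the integral over the slab is at least a
constant times `a^(-(N-α)) · a · r^(N-1) ≍ a^α / (log a)^(β(N-1))`, which tends to infinity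
because powers of `log a` are negligible against `a^α`. -/

open MeasureTheory Real Filter Topology

lemma tendsto_rpow_div_log_rpow_atTop {s : ℝ} (hs : 0 < s) (r : ℝ) :
    Tendsto (fun x => x ^ s / log x ^ r) atTop atTop := by
  have hpos : ∀ᶠ x in atTop, 0 < log x ^ r / x ^ s := by
    filter_upwards [eventually_gt_atTop 1] with x hx
    exact div_pos (rpow_pos_of_pos (log_pos hx) r) (rpow_pos_of_pos (by linarith) s)
  refine ((tendsto_nhdsWithin_iff.2 ⟨(isLittleO_log_rpow_rpow_atTop r hs).tendsto_div_nhds_zero,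
    hpos⟩).inv_tendsto_nhdsGT_zero).congr fun x => ?_
  simp only [Pi.inv_apply, inv_div]

lemma ofReal_rpow_neg_mul_measure_le_setLIntegral {E : Type*} [NormedAddCommGroup E]
    [MeasurableSpace E] (μ : Measure E) {S : Set E} (hS : MeasurableSet S) {x : E} {R s : ℝ}
    (hs : 0 ≤ s) (hxS : ∀ y ∈ S, 0 < ‖x - y‖ ∧ ‖x - y‖ ≤ R) :
    ENNReal.ofReal (R ^ (-s)) * μ S ≤ ∫⁻ y in S, ENNReal.ofReal (‖x - y‖ ^ (-s)) ∂μ := by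
  rw [← setLIntegral_const]
  refine setLIntegral_mono' hS fun y hy => ENNReal.ofReal_le_ofReal ?_
  exact rpow_le_rpow_of_nonpos (hxS y hy).1 (hxS y hy).2 (neg_nonpos.2 hs)

lemma EuclideanSpace.norm_le_sqrt_card_mul {ι : Type*} [Fintype ι] {y : EuclideanSpace ℝ ι}
    {c : ℝ} (hc : 0 ≤ c) (hy : ∀ i, |y i| ≤ c) : ‖y‖ ≤ √(Fintype.card ι) * c := by
  calc ‖y‖ = √(∑ i, ‖y i‖ ^ 2) := EuclideanSpace.norm_eq y
    _ ≤ √(∑ _i : ι, c ^ 2) := by gcongr with i; exact hy i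
    _ = √(Fintype.card ι) * c := by
      rw [Finset.sum_const, Finset.card_univ, nsmul_eq_mul, sqrt_mul (Nat.cast_nonneg _),
        sqrt_sq hc]

section Slab

open Set

variable {ι : Type*} [DecidableEq ι]

def slab (e : ι) (a r : ℝ) : Set (EuclideanSpace ℝ ι) :=
  WithLp.ofLp ⁻¹' univ.pi fun i => if i = e then Icc (a / 2) a else Icc 0 r

lemma mem_slab {e : ι} {a r : ℝ} {y : EuclideanSpace ℝ ι} :
    y ∈ slab e a r ↔ y e ∈ Icc (a / 2) a ∧ ∀ i ≠ e, y i ∈ Icc 0 r := by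
  simp only [slab, mem_preimage, mem_univ_pi]
  refine ⟨fun h => ⟨by simpa using h e, fun i hi => by simpa [hi] using h i⟩, ?_⟩
  rintro ⟨he, hi⟩ i
  split_ifs with h
  · exact h ▸ he
  · exact hi i h

variable [Fintype ι]

def thorn (e : ι) (β : ℝ) : Set (EuclideanSpace ℝ ι) :=
  {y | exp 1 ≤ y e ∧ ∑ i ∈ Finset.univ.erase e, y i ^ 2 ≤ (y e / log (y e) ^ β) ^ 2}

lemma measurableSet_slab (e : ι) (a r : ℝ) : MeasurableSet (slab e a r) :=
  (PiLp.volume_preserving_ofLp ι).measurable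
    (MeasurableSet.univ_pi fun i => by split_ifs <;> exact measurableSet_Icc)

lemma volume_slab (e : ι) (a r : ℝ) :
    volume (slab e a r) = ENNReal.ofReal (a / 2) * ENNReal.ofReal r ^ (Fintype.card ι - 1) := by
  rw [slab, (PiLp.volume_preserving_ofLp ι).measure_preimage
    (MeasurableSet.univ_pi fun i => by split_ifs <;> exact measurableSet_Icc).nullMeasurableSet,
    volume_pi_pi, ← Finset.mul_prod_erase _ _ (Finset.mem_univ e)]
  have hrest : ∀ i ∈ Finset.univ.erase e,
      volume (if i = e then Icc (a / 2) a else Icc 0 r) = ENNReal.ofReal r := fun i hi => by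
    simp [Finset.ne_of_mem_erase hi]
  rw [Finset.prod_congr rfl hrest, Finset.prod_const, Finset.card_erase_of_mem (Finset.mem_univ e),
    Finset.card_univ, if_pos rfl, Real.volume_Icc]
  ring_nf

lemma norm_le_of_mem_slab {e : ι} {a r : ℝ} (hr : r ≤ a) {y : EuclideanSpace ℝ ι}
    (hy : y ∈ slab e a r) : ‖y‖ ≤ √(Fintype.card ι) * a := by
  obtain ⟨he, hi⟩ := mem_slab.1 hy
  have ha : 0 ≤ a := by linarith [he.1, he.2]
  refine EuclideanSpace.norm_le_sqrt_card_mul ha fun i => abs_le.2 ?_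
  by_cases h : i = e
  · subst h; constructor <;> linarith [he.1, he.2]
  · constructor <;> linarith [(hi i h).1, (hi i h).2]

lemma slab_subset_thorn {e : ι} {a r β : ℝ} (ha : exp 1 ≤ a / 2) (hr : 0 ≤ r) (hβ : 0 ≤ β)
    (hra : √(Fintype.card ι) * r ≤ a / 2 / log a ^ β) : slab e a r ⊆ thorn e β := by
  intro y hy
  obtain ⟨⟨hae, hea⟩, hi⟩ := mem_slab.1 hy
  have hexp : exp 1 ≤ y e := ha.trans hae
  have hlog : 0 < log (y e) := log_pos (by linarith [add_one_le_exp (1 : ℝ)])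
  have hdiv : a / 2 / log a ^ β ≤ y e / log (y e) ^ β :=
    div_le_div₀ (by linarith [exp_pos 1]) hae (rpow_pos_of_pos hlog β)
      (rpow_le_rpow hlog.le (log_le_log (by linarith [exp_pos 1]) hea) hβ)
  refine ⟨hexp, ?_⟩
  calc ∑ i ∈ Finset.univ.erase e, y i ^ 2
      ≤ ∑ _i ∈ Finset.univ.erase e, r ^ 2 := Finset.sum_le_sum fun i hi' =>
        have hyi := hi i (Finset.ne_of_mem_erase hi')
        pow_le_pow_left₀ hyi.1 hyi.2 2
    _ ≤ ∑ _i : ι, r ^ 2 := Finset.sum_le_sum_of_subset_of_nonneg (Finset.erase_subset _ _)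
        fun _ _ _ => sq_nonneg r
    _ = (√(Fintype.card ι) * r) ^ 2 := by
        rw [Finset.sum_const, Finset.card_univ, nsmul_eq_mul, mul_pow, sq_sqrt (Nat.cast_nonneg _)]
    _ ≤ (y e / log (y e) ^ β) ^ 2 := pow_le_pow_left₀ (by positivity) (hra.trans hdiv) 2

lemma ofReal_mul_volume_slab_le_setLIntegral (e : ι) {a r s : ℝ} {x : EuclideanSpace ℝ ι}
    (hxa : ‖x‖ < a / 2) (hr : r ≤ a) (hs : 0 ≤ s) :
    ENNReal.ofReal (((√(Fintype.card ι) + 1) * a) ^ (-s)) * volume (slab e a r) ≤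
      ∫⁻ y in slab e a r, ENNReal.ofReal (‖x - y‖ ^ (-s)) := by
  refine ofReal_rpow_neg_mul_measure_le_setLIntegral _ (measurableSet_slab e a r) hs
    fun y hy => ⟨norm_sub_pos_iff.2 fun hxy => ?_, ?_⟩
  · have hxe : x e ≤ ‖x‖ := (le_abs_self _).trans (PiLp.norm_apply_le x e)
    linarith [(mem_slab.1 (hxy ▸ hy)).1.1]
  · calc ‖x - y‖ ≤ ‖x‖ + ‖y‖ := norm_sub_le x y
      _ ≤ a + √(Fintype.card ι) * a := add_le_add (by linarith [norm_nonneg x])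
          (norm_le_of_mem_slab hr hy)
      _ = (√(Fintype.card ι) + 1) * a := by ring

lemma ofReal_le_setLIntegral_thorn (e : ι) {β s a : ℝ} (hβ : 0 ≤ β) (hs : 0 ≤ s)
    {x : EuclideanSpace ℝ ι} (ha : 2 * exp 1 ≤ a) (hxa : 2 * ‖x‖ < a) :
    ENNReal.ofReal (((√(Fintype.card ι) + 1) * a) ^ (-s) *
        (a / 2 * (a / 2 / (√(Fintype.card ι) * log a ^ β)) ^ (Fintype.card ι - 1))) ≤
      ∫⁻ y in thorn e β, ENNReal.ofReal (‖x - y‖ ^ (-s)) := by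
  set c := √(Fintype.card ι : ℝ)
  set r := a / 2 / (c * log a ^ β)
  have hc : 1 ≤ c := one_le_sqrt.2 (by exact_mod_cast Fintype.card_pos_iff.2 ⟨e⟩)
  have ha0 : 0 < a := by linarith [exp_pos 1]
  have hlog : 1 ≤ log a := by
    rw [le_log_iff_exp_le ha0]
    linarith [exp_pos 1]
  have hL : 1 ≤ log a ^ β := one_le_rpow hlog hβ
  have hr0 : 0 ≤ r := by positivity
  have hra : r ≤ a := by
    refine (div_le_self (by positivity) (one_le_mul_of_one_le_of_one_le hc hL)).trans ?_
    linarith [exp_pos 1]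
  have hcr : c * r = a / 2 / log a ^ β := by
    simp only [r]
    field_simp
  calc ENNReal.ofReal (((c + 1) * a) ^ (-s) * (a / 2 * r ^ (Fintype.card ι - 1)))
      = ENNReal.ofReal (((c + 1) * a) ^ (-s)) * volume (slab e a r) := by
        rw [volume_slab, ENNReal.ofReal_mul (by positivity), ENNReal.ofReal_mul (by positivity),
          ENNReal.ofReal_pow hr0]
    _ ≤ ∫⁻ y in slab e a r, ENNReal.ofReal (‖x - y‖ ^ (-s)) :=
        ofReal_mul_volume_slab_le_setLIntegral e (by linarith) hra hs
    _ ≤ ∫⁻ y in thorn e β, ENNReal.ofReal (‖x - y‖ ^ (-s)) :=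
        lintegral_mono_set (slab_subset_thorn (by linarith) hr0 hβ hcr.le)

end Slab

lemma tendsto_slab_lower_bound_atTop {n : ℕ} (hn : 0 < n) {α : ℝ} (hα : 0 < α) (β : ℝ) :
    Tendsto (fun a => ((√n + 1) * a) ^ (-((n : ℝ) - α)) *
      (a / 2 * (a / 2 / (√n * log a ^ β)) ^ (n - 1))) atTop atTop := by
  obtain ⟨m, rfl⟩ := Nat.exists_eq_add_one.2 hn
  have hc0 : √((m + 1 : ℕ) : ℝ) ≠ 0 := by positivity
  -- for `a > 1` the function is a positive constant times `a ^ α / log a ^ (β * m)`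
  refine ((tendsto_rpow_div_log_rpow_atTop hα (β * m)).const_mul_atTop (by positivity :
    0 < (√((m + 1 : ℕ) : ℝ) + 1) ^ (-(((m + 1 : ℕ) : ℝ) - α)) /
      (2 * (2 * √((m + 1 : ℕ) : ℝ)) ^ m))).congr' ?_
  filter_upwards [eventually_gt_atTop 1] with a ha
  have hlog := log_pos ha
  have hL : log a ^ β ≠ 0 := (rpow_pos_of_pos hlog β).ne'
  have hpow : a ^ (-(((m + 1 : ℕ) : ℝ) - α)) * a ^ (m + 1) = a ^ α := by
    rw [← rpow_natCast, ← rpow_add (by linarith)]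
    congr 1
    ring
  rw [Nat.add_sub_cancel, mul_rpow (by positivity) (by linarith), rpow_mul hlog.le, rpow_natCast,
    ← hpow]
  field_simp
  rw [div_pow, mul_pow, mul_pow]
  field_simp
  ring

theorem lintegral_thorn_rpow_neg_norm_sub_eq_top {ι : Type*} [Fintype ι] [DecidableEq ι]
    (e : ι) {α β : ℝ} (hα : 0 < α) (hαn : α ≤ Fintype.card ι) (hβ : 0 ≤ β)
    (x : EuclideanSpace ℝ ι) :
    ∫⁻ y in thorn e β, ENNReal.ofReal (‖x - y‖ ^ (-((Fintype.card ι : ℝ) - α))) = ⊤ :=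
  top_unique <| le_of_tendsto (ENNReal.tendsto_ofReal_atTop.comp
    (tendsto_slab_lower_bound_atTop (Fintype.card_pos_iff.2 ⟨e⟩) hα β))
    ((eventually_ge_atTop (2 * exp 1)).and (eventually_gt_atTop (2 * ‖x‖)) |>.mono
      fun _ ha => ofReal_le_setLIntegral_thorn e hβ (by linarith) ha.1 ha.2)

/-- for the thorn `A = {x : x₁ ≥ e, x₂²+⋯+x_N² ≤ h(x₁)²}` with
`h(r) = r/(ln r)^β`, `β > 1/(N-3)`, the Riesz integral `∫_A |x-y|^{-(N-α)} dy`
is infinite for every `x`. -/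
theorem stmt2 (N : ℕ) (hN : 4 ≤ N) (α β : ℝ) (hα1 : 0 < α) (hα2 : α < 2)
    (hβ : 1 / ((N : ℝ) - 3) < β) :
    ∀ x : EuclideanSpace ℝ (Fin N),
      ∫⁻ y in {y : EuclideanSpace ℝ (Fin N) |
          Real.exp 1 ≤ y ⟨0, by omega⟩ ∧
          ∑ i ∈ Finset.univ.erase (⟨0, by omega⟩ : Fin N), (y i) ^ 2 ≤
            (y ⟨0, by omega⟩ / (Real.log (y ⟨0, by omega⟩)) ^ β) ^ 2},
        ENNReal.ofReal (‖x - y‖ ^ (-((N : ℝ) - α))) = ⊤ := by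
  intro x
  have hN4 : (4 : ℝ) ≤ N := by exact_mod_cast hN
  have hβ0 : 0 ≤ β := (one_div_pos.2 (by linarith)).le.trans hβ.le
  have h := lintegral_thorn_rpow_neg_norm_sub_eq_top (⟨0, by omega⟩ : Fin N) hα1
    (by simp only [Fintype.card_fin]; linarith) hβ0 x
  rwa [Fintype.card_fin] at h
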